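/- Let 1 ≤ k ≤ n and let E_k denote the k-th elementary symmetric polynomial in n variables. Then E_k is hyperbolic with respect to 𝟙 = (1,…,1): E_k(𝟙) > 0 and for every x ∈ ℝⁿ the univariate polynomial t ↦ E_k(x₁ + t, …, xₙ + t) of degree k has only real roots. -/

import Mathlib

/-!
Write `P_m(t) = E_m(x₁ + t, …, xₙ + t)`. Since `∂E_{m+1}/∂xᵢ` summed over `i` is `(n - m) E_m`,
we get `P_{m+1}' = (n - m) P_m`. The top polynomial `P_n = ∏ (xᵢ + t)` splits over `ℝ`, and by
Rolle's theorem the derivative of a real polynomial with only real roots has only real roots, so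
by downward induction every `P_m` has degree `m` and only real roots.
-/

open Polynomial Finset

theorem Finset.sum_powersetCard_succ_sum_erase {α M : Type*} [DecidableEq α] [AddCommMonoid M]
    (u : Finset α) (m : ℕ) (g : Finset α → M) :
    ∑ s ∈ u.powersetCard (m + 1), ∑ i ∈ s, g (s.erase i) =
      ∑ t ∈ u.powersetCard m, (#u - m) • g t := by
  have hcompl : ∀ t ∈ u.powersetCard m, (#u - m) • g t = ∑ i ∈ u \ t, g t := by
    intro t ht
    rw [mem_powersetCard] at ht
    rw [sum_const, card_sdiff_of_subset ht.1, ht.2]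
  rw [sum_congr rfl hcompl, sum_sigma', sum_sigma']
  -- double counting: `(s, i)` with `i ∈ s` corresponds to `(s.erase i, i)` with `i ∈ u \ s.erase i`
  refine sum_nbij' (fun p ↦ ⟨p.1.erase p.2, p.2⟩) (fun p ↦ ⟨insert p.2 p.1, p.2⟩)
    ?_ ?_ ?_ ?_ (fun _ _ ↦ rfl)
  · rintro ⟨s, i⟩ hp
    simp only [mem_sigma, mem_powersetCard, mem_sdiff] at hp ⊢
    obtain ⟨⟨hsu, hcard⟩, hi⟩ := hp
    exact ⟨⟨(erase_subset i s).trans hsu, by rw [card_erase_of_mem hi, hcard]; rfl⟩,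
      hsu hi, notMem_erase i s⟩
  · rintro ⟨t, i⟩ hp
    simp only [mem_sigma, mem_powersetCard, mem_sdiff] at hp ⊢
    obtain ⟨⟨htu, hcard⟩, hiu, hit⟩ := hp
    exact ⟨⟨insert_subset hiu htu, by rw [card_insert_of_notMem hit, hcard]⟩, mem_insert_self i t⟩
  · rintro ⟨s, i⟩ hp
    simp only [mem_sigma] at hp
    simp [insert_erase hp.2]
  · rintro ⟨t, i⟩ hp
    simp only [mem_sigma, mem_sdiff] at hp
    simp [erase_insert hp.2.2]

theorem Polynomial.derivative_sum_powersetCard_succ_prod {R ι : Type*} [CommSemiring R]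
    [DecidableEq ι] (u : Finset ι) (m : ℕ) {f : ι → R[X]} (hf : ∀ i, derivative (f i) = 1) :
    derivative (∑ s ∈ u.powersetCard (m + 1), ∏ i ∈ s, f i) =
      (#u - m) • ∑ t ∈ u.powersetCard m, ∏ i ∈ t, f i := by
  simp only [derivative_sum, derivative_prod_finset, hf, mul_one, smul_sum]
  exact sum_powersetCard_succ_sum_erase u m fun t ↦ ∏ i ∈ t, f i

theorem Polynomial.Splits.derivative_real {p : ℝ[X]} (hp : p.Splits) : (derivative p).Splits := by
  rw [splits_iff_card_roots] at hp ⊢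
  have := card_roots_le_derivative p
  have := card_roots' (derivative p)
  have := natDegree_derivative_le p
  omega

theorem Polynomial.Splits.im_eq_zero_of_aeval_eq_zero {p : ℝ[X]} (hp : p.Splits) (hp0 : p ≠ 0)
    {z : ℂ} (hz : aeval z p = 0) : z.im = 0 := by
  obtain ⟨r, rfl⟩ := hp.mem_range_of_isRoot hp0 (x := z) (i := algebraMap ℝ ℂ)
    (by rwa [IsRoot, eval_map_algebraMap])
  exact Complex.ofReal_im r

/-- `E_m(x₁ + t, …, xₙ + t)` as a polynomial in `t`. -/
noncomputable def shiftedEsymm {R ι : Type*} [CommSemiring R] [Fintype ι] (x : ι → R) (m : ℕ) :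
    R[X] :=
  ∑ s ∈ powersetCard m univ, ∏ i ∈ s, (C (x i) + X)

section Semiring

variable {R ι : Type*} [CommSemiring R] [Fintype ι] (x : ι → R)

theorem derivative_shiftedEsymm_succ (m : ℕ) :
    derivative (shiftedEsymm x (m + 1)) = (Fintype.card ι - m) • shiftedEsymm x m := by
  classical
  exact derivative_sum_powersetCard_succ_prod univ m (by simp)

theorem shiftedEsymm_card : shiftedEsymm x (Fintype.card ι) = ∏ i, (C (x i) + X) := by
  rw [shiftedEsymm, ← card_univ, powersetCard_self, sum_singleton]

theorem splits_shiftedEsymm_card : (shiftedEsymm x (Fintype.card ι)).Splits := by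
  simp_rw [shiftedEsymm_card, add_comm (C _)]
  exact Splits.prod fun i _ ↦ Splits.X_add_C (x i)

theorem degree_shiftedEsymm_card [Nontrivial R] :
    (shiftedEsymm x (Fintype.card ι)).degree = Fintype.card ι := by
  simp_rw [shiftedEsymm_card, add_comm (C _)]
  rw [degree_prod_of_monic _ _ fun i _ ↦ monic_X_add_C (x i)]
  simp

end Semiring

theorem degree_shiftedEsymm_and_splits {ι : Type*} [Fintype ι] (x : ι → ℝ) {m : ℕ} (hm : m ≤ Fintype.card ι) :
    (shiftedEsymm x m).degree = m ∧ (shiftedEsymm x m).Splits := by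
  induction hm using Nat.decreasingInduction with
  | self => exact ⟨degree_shiftedEsymm_card x, splits_shiftedEsymm_card x⟩
  | of_succ m hm ih =>
    obtain ⟨hdeg, hsplits⟩ := ih
    have hc : ((Fintype.card ι - m : ℕ) : ℝ) ≠ 0 := by norm_cast; omega
    have hP : shiftedEsymm x m =
        C ((Fintype.card ι - m : ℕ) : ℝ)⁻¹ * derivative (shiftedEsymm x (m + 1)) := by
      rw [derivative_shiftedEsymm_succ, nsmul_eq_mul, ← C_eq_natCast, ← mul_assoc, ← C_mul,
        inv_mul_cancel₀ hc, C_1, one_mul]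
    have hnat := natDegree_eq_of_degree_eq_some hdeg
    refine ⟨?_, hP ▸ hsplits.derivative_real.C_mul _⟩
    rw [hP, degree_C_mul (inv_ne_zero hc), degree_derivative (by omega), hnat]
    rfl

theorem stmt15 {n k : ℕ} (hkn : k ≤ n) :
    (0 < ∑ s ∈ Finset.powersetCard k (Finset.univ : Finset (Fin n)),
          ∏ i ∈ s, (1 : ℝ)) ∧
    ∀ x : Fin n → ℝ,
      (∑ s ∈ Finset.powersetCard k (Finset.univ : Finset (Fin n)),
          ∏ i ∈ s, (Polynomial.C (x i) + Polynomial.X)).natDegree = k ∧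
      ∀ z : ℂ,
        Polynomial.aeval z
          (∑ s ∈ Finset.powersetCard k (Finset.univ : Finset (Fin n)),
            ∏ i ∈ s, (Polynomial.C (x i) + Polynomial.X)) = 0 → z.im = 0 := by
  refine ⟨by simpa using Nat.choose_pos hkn, fun x ↦ ?_⟩
  obtain ⟨hdeg, hsplits⟩ := degree_shiftedEsymm_and_splits x (m := k) (by simpa using hkn)
  exact ⟨natDegree_eq_of_degree_eq_some hdeg,
    fun z ↦ hsplits.im_eq_zero_of_aeval_eq_zero (ne_zero_of_coe_le_degree hdeg.ge)⟩
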